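/- Let W[1..m] be a sequence of m ≥ 1 binary strings of length ℓ ≥ 1, let π[1..m] be a permutation of [1..m], with s(i) as in the definition of PermSeqToString, and let T = PermSeqToString_ℓ(π,W). Fix X ∈ {0,1}^{≤ℓ} and b, e ∈ [0..m], and set P₁ = rev(X)·4·s(b), P₂ = rev(X)·4·s(e), and β = ℓ + ⌊log₂ m⌋ + 2. Let 𝒫 = { i ∈ (b..e] : X is a prefix of W[i] } and 𝒬 = { ⌈ j / β ⌉ : j ∈ LexRange(P₁,P₂,T) }. Then 𝒫 = { π[q] : q ∈ 𝒬 }. -/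

import Mathlib

/-- Strict lexicographic order on strings: `U ≺ V` iff `U` is a proper prefix of `V`,
or `U` and `V` first differ at a position where `U` has the smaller symbol. -/
def LexLt {α : Type*} [LT α] (U V : List α) : Prop := List.Lex (· < ·) U V

/-- Non-strict lexicographic order on strings. -/
def LexLe {α : Type*} [LT α] (U V : List α) : Prop := LexLt U V ∨ U = V

/-- The suffix `T[j..|T|]` of `T` (1-based index `j`). -/
def Suf {α : Type*} (T : List α) (j : ℕ) : List α := T.drop (j - 1)

/-- `Occ P T` is the set of starting positions (1-based) of occurrences of `P` in `T`. -/
def Occ {α : Type*} (P T : List α) : Set ℕ :=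
  { j | 1 ≤ j ∧ j + P.length ≤ T.length + 1 ∧ (Suf T j).take P.length = P }

/-- `RangeBeg P T` = number of suffixes of `T` lexicographically smaller than `P`. -/
noncomputable def RangeBeg {α : Type*} [LT α] (P T : List α) : ℕ :=
  { j | 1 ≤ j ∧ j ≤ T.length ∧ LexLt (Suf T j) P }.ncard

/-- `RangeEnd P T = RangeBeg P T + |Occ P T|`. -/
noncomputable def RangeEnd {α : Type*} [LT α] (P T : List α) : ℕ :=
  RangeBeg P T + (Occ P T).ncard

/-- `LexRange P₁ P₂ T` = positions `j ∈ [1..|T|]` with `P₁ ⪯ T[j..|T|] ≺ P₂`. -/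
def LexRange {α : Type*} [LT α] (P₁ P₂ T : List α) : Set ℕ :=
  { j | 1 ≤ j ∧ j ≤ T.length ∧ LexLe P₁ (Suf T j) ∧ LexLt (Suf T j) P₂ }

/-- `sa` is the suffix array of `T` (1-based): a permutation of `[1..|T|]` listing the
starting positions of the suffixes of `T` in increasing lexicographic order. -/
def IsSuffixArray {α : Type*} [LT α] (T : List α) (sa : ℕ → ℕ) : Prop :=
  (∀ i, 1 ≤ i → i ≤ T.length → 1 ≤ sa i ∧ sa i ≤ T.length) ∧
  (∀ j, 1 ≤ j → j ≤ T.length → ∃ i, 1 ≤ i ∧ i ≤ T.length ∧ sa i = j) ∧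
  (∀ i j, 1 ≤ i → i < j → j ≤ T.length → LexLt (Suf T (sa i)) (Suf T (sa j)))

/-- `binSym k x` : the length-`k` binary representation of `x` (MSB first, leading zeros). -/
def binSym (k x : ℕ) : List ℕ := (List.range k).map fun i => x / 2 ^ (k - 1 - i) % 2

/-- `binStr k S` = `bin_k(S[1]) · bin_k(S[2]) · … · bin_k(S[|S|])`. -/
def binStr (k : ℕ) (S : List ℕ) : List ℕ := (S.map (binSym k)).flatten

/-- `ebinSym k x = 1^{k+1} · 0 · bin_k(x) · 0`. -/
def ebinSym (k x : ℕ) : List ℕ := List.replicate (k + 1) 1 ++ [0] ++ binSym k x ++ [0]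

/-- `ebinStr k S` = concatenation of `ebin_k(S[i])` for `i = 1, …, |S|`. -/
def ebinStr (k : ℕ) (S : List ℕ) : List ℕ := (S.map (ebinSym k)).flatten

/-- `sEnc k i` : length-`k` base-2 representation of `i` with `0 ↦ 2` and `1 ↦ 3`. -/
def sEnc (k i : ℕ) : List ℕ := (binSym k i).map (· + 2)

/-- `SeqToString m W = ⊙_{i=1}^{m} rev(W[i]) · 4 · s(i-1)` with `k = 1 + ⌊log₂ m⌋`. -/
def SeqToString (m : ℕ) (W : ℕ → List ℕ) : List ℕ :=
  ((List.range m).map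
    fun i => (W (i + 1)).reverse ++ [4] ++ sEnc (1 + Nat.log 2 m) i).flatten

/-- `PermSeqToString m π W = ⊙_{i=1}^{m} rev(W[π[i]]) · 4 · s(π[i]-1)`. -/
def PermSeqToString (m : ℕ) (perm : ℕ → ℕ) (W : ℕ → List ℕ) : List ℕ :=
  ((List.range m).map
    fun i => (W (perm (i + 1))).reverse ++ [4]
      ++ sEnc (1 + Nat.log 2 m) (perm (i + 1) - 1)).flatten

/-- `PrefixRank W j X = |{ i ∈ [1..j] : X is a prefix of W[i] }|`. -/
noncomputable def PrefixRank {α : Type*} (W : ℕ → List α) (j : ℕ) (X : List α) : ℕ :=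
  { i | 1 ≤ i ∧ i ≤ j ∧ X <+: W i }.ncard

/-- `p` is the `r`-th smallest element of the set `A ⊆ ℕ`. -/
def IsKthSmallest (A : Set ℕ) (r p : ℕ) : Prop :=
  p ∈ A ∧ (A ∩ Set.Iic p).ncard = r

/-- Ceiling division `⌈a / b⌉` of positive naturals. -/
def cdiv (a b : ℕ) : ℕ := (a + b - 1) / b

/-- Alphabet inversion: `inv_σ(S)[i] = σ - 1 - S[i]`. -/
def invStr (σ : ℕ) (S : List ℕ) : List ℕ := S.map fun a => σ - 1 - a

/-- `p` is a period of `S`: `1 ≤ p ≤ |S|` and `S[i] = S[i+p]` for all `i ∈ [1..|S|-p]`. -/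
def IsPeriod {α : Type*} (S : List α) (p : ℕ) : Prop :=
  1 ≤ p ∧ p ≤ S.length ∧ S.drop p <+: S

/-- `per S`: the smallest period of `S`. -/
noncomputable def per {α : Type*} (S : List α) : ℕ := sInf { p | IsPeriod S p }

/-- `P` is `τ`-periodic: `|P| ≥ 3τ - 1` and `per(P[1..3τ-1]) ≤ τ/3`. -/
noncomputable def TauPeriodic {α : Type*} (τ : ℕ) (P : List α) : Prop :=
  3 * τ ≤ P.length + 1 ∧ 3 * per (P.take (3 * τ - 1)) ≤ τ

/-- `R(τ,T) = { i ∈ [1..n-3τ+2] : per(T[i..i+3τ-2]) ≤ τ/3 }`. -/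
noncomputable def Rset {α : Type*} (τ : ℕ) (T : List α) : Set ℕ :=
  { i | 1 ≤ i ∧ i + 3 * τ ≤ T.length + 2 ∧ 3 * per ((Suf T i).take (3 * τ - 1)) ≤ τ }

/-- `S` is a `τ`-synchronizing set of `T` (consistency and density conditions). -/
noncomputable def IsSyncSet {α : Type*} (τ : ℕ) (T : List α) (S : Set ℕ) : Prop :=
  (∀ j ∈ S, 1 ≤ j ∧ j + 2 * τ ≤ T.length + 1) ∧
  (∀ i j, 1 ≤ i → i + 2 * τ ≤ T.length + 1 → 1 ≤ j → j + 2 * τ ≤ T.length + 1 →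
    (Suf T i).take (2 * τ) = (Suf T j).take (2 * τ) → (i ∈ S ↔ j ∈ S)) ∧
  (∀ i, 1 ≤ i → i + 3 * τ ≤ T.length + 2 → (S ∩ Set.Ico i (i + τ) = ∅ ↔ i ∈ Rset τ T))

/-- `succ_S(x) = min { x' ∈ S : x' ≥ x }`. -/
noncomputable def succS (S : Set ℕ) (x : ℕ) : ℕ := sInf (S ∩ Set.Ici x)

/-- `DistPrefixes(τ,T,S) = { T[j..succ_S(j)+2τ) : j ∈ [1..n-3τ+2] \ R(τ,T) }`. -/
noncomputable def DistPrefixes {α : Type*} (τ : ℕ) (T : List α) (S : Set ℕ) : Set (List α) :=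
  (fun j => (Suf T j).take (succS S j + 2 * τ - j)) ''
    { j | 1 ≤ j ∧ j + 3 * τ ≤ T.length + 2 ∧ j ∉ Rset τ T }

/-- `r` is the value of the prefix RMQ: the smallest index `i ∈ (b..e]` with `X` a prefix of
`W[i]` minimizing `A[i]` (ties broken towards the smaller index). -/
def IsPrefixRMQ (A : ℕ → ℤ) (W : ℕ → List ℕ) (b e : ℕ) (X : List ℕ) (r : ℕ) : Prop :=
  (b < r ∧ r ≤ e ∧ X <+: W r) ∧
  (∀ i, b < i → i ≤ e → X <+: W i → A r ≤ A i) ∧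
  (∀ i, b < i → i ≤ e → X <+: W i → A i = A r → r ≤ i)
/-! The text `T = PermSeqToString m π W` is a concatenation of `m` blocks of length
`β = ℓ + ⌊log₂ m⌋ + 2`, the `q`-th one being `rev(W[π(q+1)]) · 4 · s(π(q+1) - 1)`, and the
separator `4` occurs nowhere else. A suffix lying between `P₁` and `P₂` starts with `rev(X) · 4`,
so its `4` is the separator of some block `q`: the suffix starts at offset `ℓ - |X|` of that block,
whence `⌈j / β⌉ = q + 1`, and `X` is a prefix of `W[π(q+1)]`. What remains of the comparison is
`s(b) ⪯ s(π(q+1) - 1) · … ≺ s(e)`; as all codes `s(i)` have the same length and `s` is strictly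
monotone on `[0, 2^k)`, this says exactly `b < π(q+1) ≤ e`. -/

namespace List

theorem eq_length_of_getElem?_append_cons_eq {α : Type*} {u v : List α} {a : α} {o : ℕ}
    (hu : a ∉ u) (hv : a ∉ v) (h : (u ++ a :: v)[o]? = some a) : o = u.length := by
  rcases lt_trichotomy o u.length with ho | ho | ho
  · rw [getElem?_append_left ho] at h
    exact absurd (mem_of_getElem? h) hu
  · exact ho
  · rw [getElem?_append_right ho.le, getElem?_cons,
      if_neg (by omega)] at h
    exact absurd (mem_of_getElem? h) hv

variable {α : Type*} [LinearOrder α]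

theorem cons_le_cons_iff_of_linearOrder {a b : α} {l l' : List α} :
    a :: l ≤ b :: l' ↔ a < b ∨ a = b ∧ l ≤ l' := by
  simp only [le_iff_lt_or_eq, cons_lt_cons_iff, cons.injEq]
  tauto

theorem append_lt_append_iff_of_length_eq {a b u v : List α} (h : a.length = b.length) :
    a ++ u < b ++ v ↔ a < b ∨ a = b ∧ u < v := by
  induction a generalizing b with
  | nil => simp_all [List.length_eq_zero_iff.mp h.symm]
  | cons x a ih =>
    obtain _ | ⟨y, b⟩ := b
    · simp at h
    · simp only [cons_append, cons_lt_cons_iff, ih (by simpa using h), cons.injEq]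
      tauto

theorem le_append_iff_of_length_eq {a b : List α} (r : List α) (h : a.length = b.length) :
    a ≤ b ++ r ↔ a ≤ b := by
  have := append_lt_append_iff_of_length_eq (u := r) (v := []) h.symm
  simp only [append_nil, not_lt_nil, and_false, or_false] at this
  rw [← not_lt, this, not_lt]

theorem append_lt_iff_of_length_eq {a b : List α} (r : List α) (h : a.length = b.length) :
    a ++ r < b ↔ a < b := by
  simpa using append_lt_append_iff_of_length_eq (u := r) (v := []) h

theorem prefix_of_append_le_of_lt_append {C u v Y : List α} (h₁ : C ++ u ≤ Y)
    (h₂ : Y < C ++ v) : C <+: Y := by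
  induction C generalizing Y with
  | nil => exact nil_prefix
  | cons c C ih =>
    obtain _ | ⟨y, Y⟩ := Y
    · simp [le_iff_lt_or_eq] at h₁
    · rw [cons_append, cons_le_cons_iff_of_linearOrder] at h₁
      rw [cons_append, cons_lt_cons_iff] at h₂
      obtain ⟨rfl, hC⟩ : c = y ∧ C ++ u ≤ Y := by
        rcases h₁ with h₁ | h₁ <;> rcases h₂ with h₂ | h₂
        · exact absurd h₁ (not_lt_of_gt h₂)
        · exact absurd h₁ (h₂.1 ▸ lt_irrefl c)
        · exact absurd h₂ (h₁.1 ▸ lt_irrefl c)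
        · exact h₁
      exact cons_prefix_cons.mpr ⟨rfl, ih hC (h₂.resolve_left (lt_irrefl c)).2⟩

end List

theorem length_binSym (k x : ℕ) : (binSym k x).length = k := by simp [binSym]

theorem length_sEnc (k x : ℕ) : (sEnc k x).length = k := by simp [sEnc, length_binSym]

theorem four_not_mem_sEnc (k x : ℕ) : 4 ∉ sEnc k x := by
  simp only [sEnc, binSym, List.map_map, List.mem_map, List.mem_range, Function.comp_apply]
  rintro ⟨i, -, hi⟩
  have := Nat.mod_lt (x / 2 ^ (k - 1 - i)) two_pos
  omega

theorem binSym_succ (k x : ℕ) : binSym (k + 1) x = x / 2 ^ k % 2 :: binSym k (x % 2 ^ k) := by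
  simp only [binSym, List.range_succ_eq_map, List.map_cons, List.map_map, Nat.add_sub_cancel,
    Nat.sub_zero, List.cons.injEq, true_and]
  refine List.map_congr_left fun i hi => ?_
  have hi : i < k := List.mem_range.mp hi
  simp only [Function.comp_apply, show k - (i + 1) = k - 1 - i by omega]
  obtain ⟨d, hd⟩ : ∃ d, 2 ^ k = 2 ^ (k - 1 - i) * (2 * 2 ^ d) :=
    ⟨i, by rw [← pow_succ', ← pow_add]; congr 1; omega⟩
  rw [hd, Nat.mod_mul_right_div_self, Nat.mod_mul_right_mod]

theorem binSym_strictMonoOn (k : ℕ) : StrictMonoOn (binSym k) (Set.Iio (2 ^ k)) := by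
  induction k with
  | zero =>
    intro x hx y hy hxy
    simp_all
  | succ k ih =>
    intro x hx y hy hxy
    simp only [Set.mem_Iio, pow_succ] at hx hy
    have hx2 : x / 2 ^ k < 2 := Nat.div_lt_of_lt_mul (by linarith)
    have hy2 : y / 2 ^ k < 2 := Nat.div_lt_of_lt_mul (by linarith)
    rw [binSym_succ, binSym_succ, List.cons_lt_cons_iff, Nat.mod_eq_of_lt hx2,
      Nat.mod_eq_of_lt hy2]
    rcases (Nat.div_le_div_right (c := 2 ^ k) hxy.le).lt_or_eq with hq | hq
    · exact Or.inl hq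
    · refine Or.inr ⟨hq, ih (Nat.mod_lt _ (by positivity)) (Nat.mod_lt _ (by positivity)) ?_⟩
      have := Nat.div_add_mod x (2 ^ k)
      have := Nat.div_add_mod y (2 ^ k)
      rw [hq] at *
      omega

theorem sEnc_strictMonoOn (k : ℕ) : StrictMonoOn (sEnc k) (Set.Iio (2 ^ k)) :=
  fun _ hx _ hy hxy => List.map_lt (fun _ _ h => Nat.add_lt_add_right h 2)
    (binSym_strictMonoOn k hx hy hxy)

section Blocks

variable {α : Type*} {g : ℕ → List α} {β : ℕ}

theorem length_flatten_map_range {m : ℕ} (hg : ∀ i < m, (g i).length = β) :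
    ((List.range m).map g).flatten.length = m * β := by
  induction m with
  | zero => simp
  | succ m ih =>
    simp [List.range_succ, ih fun i hi => hg i (by omega), hg m (by omega), Nat.succ_mul]

theorem exists_drop_flatten_map_range {m q : ℕ} (hg : ∀ i < m, (g i).length = β) (hq : q < m) :
    ∃ rest, ((List.range m).map g).flatten.drop (q * β) = g q ++ rest := by
  induction m with
  | zero => omega
  | succ m ih =>
    have hg' : ∀ i < m, (g i).length = β := fun i hi => hg i (by omega)
    have hlen := length_flatten_map_range hg'
    simp only [List.range_succ, List.map_append, List.map_singleton, List.flatten_append,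
      List.flatten_singleton]
    rcases (Nat.lt_succ_iff.mp hq).lt_or_eq with hq | rfl
    · obtain ⟨rest, hrest⟩ := ih hg' hq
      refine ⟨rest ++ g m, ?_⟩
      rw [List.drop_append_of_le_length (by rw [hlen]; exact Nat.mul_le_mul_right β hq.le),
        hrest, List.append_assoc]
    · exact ⟨[], by rw [← hlen, List.drop_left, List.append_nil]⟩

end Blocks

theorem lexLe_iff_le {α : Type*} [LinearOrder α] {u v : List α} : LexLe u v ↔ u ≤ v :=
  (le_iff_lt_or_eq (a := u)).symm

theorem cdiv_mul_add_add_one {q r β : ℕ} (hr : r < β) : cdiv (q * β + r + 1) β = q + 1 := by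
  unfold cdiv
  refine Nat.div_eq_of_lt_le ?_ ?_ <;> simp only [Nat.add_mul] <;> omega

theorem sEnc_between_iff {k b e p : ℕ} (C rest : List ℕ) (hb : b < 2 ^ k) (he : e < 2 ^ k)
    (hp : p < 2 ^ k) :
    C ++ sEnc k b ≤ C ++ (sEnc k p ++ rest) ∧ C ++ (sEnc k p ++ rest) < C ++ sEnc k e ↔
      b ≤ p ∧ p < e := by
  have hC : StrictMono (C ++ ·) := fun _ _ h => List.append_left_lt h
  rw [hC.le_iff_le, hC.lt_iff_lt, List.le_append_iff_of_length_eq _ (by simp [length_sEnc]),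
    List.append_lt_iff_of_length_eq _ (by simp [length_sEnc]),
    (sEnc_strictMonoOn k).le_iff_le hb hp, (sEnc_strictMonoOn k).lt_iff_lt hp he]

section PermSeqToString

variable {m ℓ : ℕ} {perm : ℕ → ℕ} {W : ℕ → List ℕ}

theorem length_permSeqToString (hW : ∀ i, 1 ≤ i → i ≤ m → (W (perm i)).length = ℓ) :
    (PermSeqToString m perm W).length = m * (ℓ + Nat.log 2 m + 2) :=
  length_flatten_map_range fun i hi => by
    simp only [List.length_append, List.length_reverse, List.length_singleton, length_sEnc,
      hW (i + 1) (by omega) (by omega)]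
    omega

theorem exists_drop_permSeqToString (hW : ∀ i, 1 ≤ i → i ≤ m → (W (perm i)).length = ℓ)
    {q : ℕ} (hq : q < m) : ∃ rest, (PermSeqToString m perm W).drop (q * (ℓ + Nat.log 2 m + 2)) =
      ((W (perm (q + 1))).reverse ++ 4 :: sEnc (1 + Nat.log 2 m) (perm (q + 1) - 1)) ++ rest := by
  obtain ⟨rest, h⟩ := exists_drop_flatten_map_range (β := ℓ + Nat.log 2 m + 2)
    (g := fun i => (W (perm (i + 1))).reverse ++ [4] ++ sEnc (1 + Nat.log 2 m) (perm (i + 1) - 1))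
    (fun i hi => by
      simp only [List.length_append, List.length_reverse, List.length_singleton, length_sEnc,
        hW (i + 1) (by omega) (by omega)]
      omega) hq
  exact ⟨rest, h.trans (by simp)⟩

theorem mod_eq_of_getElem?_permSeqToString_eq_four
    (hW : ∀ i, 1 ≤ i → i ≤ m → (W (perm i)).length = ℓ)
    (hW4 : ∀ i, 1 ≤ i → i ≤ m → 4 ∉ W (perm i)) {t : ℕ}
    (ht : (PermSeqToString m perm W)[t]? = some 4) :
    t / (ℓ + Nat.log 2 m + 2) < m ∧ t % (ℓ + Nat.log 2 m + 2) = ℓ := by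
  set β := ℓ + Nat.log 2 m + 2
  have hlen : t < m * β := length_permSeqToString hW ▸ (List.getElem?_eq_some_iff.mp ht).1
  have hq : t / β < m := Nat.div_lt_of_lt_mul (by rwa [Nat.mul_comm])
  obtain ⟨rest, hrest⟩ := exists_drop_permSeqToString hW hq
  have hWq := hW (t / β + 1) (Nat.le_add_left 1 _) hq
  have hmod : t % β < ℓ + (1 + Nat.log 2 m + 1) := by
    have := Nat.mod_lt t (show 0 < β by omega); omega
  have hblock : ((W (perm (t / β + 1))).reverse ++
      4 :: sEnc (1 + Nat.log 2 m) (perm (t / β + 1) - 1))[t % β]? = some 4 := by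
    rwa [← List.getElem?_append_left (l₂ := rest) (by simpa [hWq, length_sEnc] using hmod),
      ← hrest, List.getElem?_drop, Nat.div_add_mod']
  refine ⟨hq, ?_⟩
  simpa [hWq] using List.eq_length_of_getElem?_append_cons_eq
    (by simpa using hW4 (t / β + 1) (Nat.le_add_left 1 _) hq) (four_not_mem_sEnc _ _) hblock

theorem exists_suf_permSeqToString (hW : ∀ i, 1 ≤ i → i ≤ m → (W (perm i)).length = ℓ)
    {q n : ℕ} (hq : q < m) (hn : n ≤ ℓ) :
    ∃ rest, Suf (PermSeqToString m perm W) (q * (ℓ + Nat.log 2 m + 2) + (ℓ - n) + 1) =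
      ((W (perm (q + 1))).take n).reverse ++ [4] ++
        (sEnc (1 + Nat.log 2 m) (perm (q + 1) - 1) ++ rest) := by
  obtain ⟨rest, hrest⟩ := exists_drop_permSeqToString hW hq
  have hWq := hW (q + 1) (by omega) (by omega)
  refine ⟨rest, ?_⟩
  rw [Suf, Nat.add_sub_cancel, ← List.drop_drop, hrest, List.append_assoc,
    List.drop_append_of_le_length (by simp [hWq]), List.drop_reverse, hWq,
    Nat.sub_sub_self hn]
  simp

theorem lexRange_permSeqToString_block_iff
    (hW : ∀ i, 1 ≤ i → i ≤ m → (W (perm i)).length = ℓ)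
    (hperm : ∀ i, 1 ≤ i → i ≤ m → 1 ≤ perm i ∧ perm i ≤ m)
    {X : List ℕ} (hX : X.length ≤ ℓ) {b e q : ℕ} (hb : b ≤ m) (he : e ≤ m) (hq : q < m) :
    (LexLe (X.reverse ++ [4] ++ sEnc (1 + Nat.log 2 m) b)
        (Suf (PermSeqToString m perm W) (q * (ℓ + Nat.log 2 m + 2) + (ℓ - X.length) + 1)) ∧
      LexLt (Suf (PermSeqToString m perm W) (q * (ℓ + Nat.log 2 m + 2) + (ℓ - X.length) + 1))
        (X.reverse ++ [4] ++ sEnc (1 + Nat.log 2 m) e)) ↔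
      X <+: W (perm (q + 1)) ∧ b < perm (q + 1) ∧ perm (q + 1) ≤ e := by
  obtain ⟨rest, hsuf⟩ := exists_suf_permSeqToString hW hq hX
  have hpq := hperm (q + 1) (by omega) (by omega)
  have hWq := hW (q + 1) (by omega) (by omega)
  have hm := Nat.lt_pow_succ_log_self one_lt_two m
  rw [Nat.succ_eq_add_one, Nat.add_comm] at hm
  have hbetween := sEnc_between_iff (X.reverse ++ [4]) rest (k := 1 + Nat.log 2 m)
    (b := b) (e := e) (p := perm (q + 1) - 1) (by omega) (by omega) (by omega)
  rw [lexLe_iff_le, hsuf]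
  constructor
  · rintro ⟨h₁, h₂⟩
    obtain ⟨r, hr⟩ := List.prefix_of_append_le_of_lt_append h₁ h₂
    have htake : (W (perm (q + 1))).take X.length = X := by
      rw [List.append_assoc, List.append_assoc] at hr
      have hXw := (List.append_inj hr (by simp [hWq, hX])).1
      rw [List.reverse_inj] at hXw
      exact hXw.symm
    rw [htake] at h₁ h₂
    have := hbetween.mp ⟨h₁, h₂⟩
    exact ⟨htake ▸ List.take_prefix _ _, by omega, by omega⟩
  · rintro ⟨hX, hbq, hqe⟩
    rw [← List.prefix_iff_eq_take.mp hX]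
    exact hbetween.mpr ⟨by omega, by omega⟩

theorem mem_lexRange_permSeqToString_iff
    (hW : ∀ i, 1 ≤ i → i ≤ m → (W (perm i)).length = ℓ)
    (hW4 : ∀ i, 1 ≤ i → i ≤ m → 4 ∉ W (perm i))
    (hperm : ∀ i, 1 ≤ i → i ≤ m → 1 ≤ perm i ∧ perm i ≤ m)
    {X : List ℕ} (hX : X.length ≤ ℓ) {b e j : ℕ} (hb : b ≤ m) (he : e ≤ m) :
    j ∈ LexRange (X.reverse ++ [4] ++ sEnc (1 + Nat.log 2 m) b)
        (X.reverse ++ [4] ++ sEnc (1 + Nat.log 2 m) e) (PermSeqToString m perm W) ↔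
      ∃ q < m, j = q * (ℓ + Nat.log 2 m + 2) + (ℓ - X.length) + 1 ∧
        X <+: W (perm (q + 1)) ∧ b < perm (q + 1) ∧ perm (q + 1) ≤ e := by
  constructor
  · rintro ⟨hj, -, h₁, h₂⟩
    obtain ⟨r, hr⟩ := List.prefix_of_append_le_of_lt_append (lexLe_iff_le.mp h₁) h₂
    have h4 : (PermSeqToString m perm W)[j - 1 + X.length]? = some 4 := by
      rw [← List.getElem?_drop, ← Suf, ← hr]
      simp
    obtain ⟨q, hq_def⟩ : ∃ q, q = (j - 1 + X.length) / (ℓ + Nat.log 2 m + 2) := ⟨_, rfl⟩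
    obtain ⟨hq, hmod⟩ := mod_eq_of_getElem?_permSeqToString_eq_four hW hW4 h4
    rw [← hq_def] at hq
    have hj' : j = q * (ℓ + Nat.log 2 m + 2) + (ℓ - X.length) + 1 := by
      have := Nat.div_add_mod' (j - 1 + X.length) (ℓ + Nat.log 2 m + 2)
      rw [← hq_def, hmod] at this
      omega
    subst hj'
    exact ⟨q, hq, rfl, (lexRange_permSeqToString_block_iff hW hperm hX hb he hq).mp ⟨h₁, h₂⟩⟩
  · rintro ⟨q, hq, rfl, hblock⟩
    obtain ⟨h₁, h₂⟩ := (lexRange_permSeqToString_block_iff hW hperm hX hb he hq).mpr hblock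
    refine ⟨by omega, ?_, h₁, h₂⟩
    rw [length_permSeqToString hW]
    have := Nat.mul_le_mul_right (ℓ + Nat.log 2 m + 2) (Nat.succ_le_of_lt hq)
    rw [Nat.succ_mul] at this
    omega

end PermSeqToString

theorem stmt14_general (m ℓ : ℕ) (W : ℕ → List ℕ)
    (hWlen : ∀ i, 1 ≤ i → i ≤ m → (W i).length = ℓ)
    (hWbin : ∀ i, 1 ≤ i → i ≤ m → ∀ a ∈ W i, a < 2)
    (perm permInv : ℕ → ℕ)
    (hperm : ∀ i, 1 ≤ i → i ≤ m → 1 ≤ perm i ∧ perm i ≤ m)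
    (hpermInv : ∀ i, 1 ≤ i → i ≤ m →
      1 ≤ permInv i ∧ permInv i ≤ m ∧ perm (permInv i) = i)
    (X : List ℕ) (hXlen : X.length ≤ ℓ)
    (b e : ℕ) (hb : b ≤ m) (he : e ≤ m) :
    { i | b < i ∧ i ≤ e ∧ X <+: W i } =
      perm '' ((fun j => cdiv j (ℓ + Nat.log 2 m + 2)) ''
        LexRange (X.reverse ++ [4] ++ sEnc (1 + Nat.log 2 m) b)
          (X.reverse ++ [4] ++ sEnc (1 + Nat.log 2 m) e)
          (PermSeqToString m perm W)) := by
  have hW : ∀ i, 1 ≤ i → i ≤ m → (W (perm i)).length = ℓ := fun i h₁ h₂ =>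
    hWlen _ (hperm i h₁ h₂).1 (hperm i h₁ h₂).2
  have hW4 : ∀ i, 1 ≤ i → i ≤ m → 4 ∉ W (perm i) := fun i h₁ h₂ h4 => by
    have := hWbin _ (hperm i h₁ h₂).1 (hperm i h₁ h₂).2 4 h4
    omega
  have hβ : ℓ - X.length < ℓ + Nat.log 2 m + 2 := by omega
  ext i
  simp only [Set.mem_ofPred_eq, Set.mem_image,
    mem_lexRange_permSeqToString_iff hW hW4 hperm hXlen hb he]
  constructor
  · rintro ⟨hbi, hie, hXi⟩
    obtain ⟨h₁, h₂, hi⟩ := hpermInv i (by omega) (by omega)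
    obtain ⟨q, hq⟩ : ∃ q, permInv i = q + 1 := ⟨permInv i - 1, by omega⟩
    rw [hq] at h₂ hi
    exact ⟨q + 1, ⟨_, ⟨q, by omega, rfl, hi ▸ ⟨hXi, hbi, hie⟩⟩, cdiv_mul_add_add_one hβ⟩, hi⟩
  · rintro ⟨_, ⟨_, ⟨q, -, rfl, hXq, hbq, hqe⟩, rfl⟩, rfl⟩
    rw [cdiv_mul_add_add_one hβ]
    exact ⟨hbq, hqe, hXq⟩

theorem stmt14 (m ℓ : ℕ) (hm : 1 ≤ m) (hℓ : 1 ≤ ℓ) (W : ℕ → List ℕ)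
    (hWlen : ∀ i, 1 ≤ i → i ≤ m → (W i).length = ℓ)
    (hWbin : ∀ i, 1 ≤ i → i ≤ m → ∀ a ∈ W i, a < 2)
    (perm permInv : ℕ → ℕ)
    (hperm : ∀ i, 1 ≤ i → i ≤ m → 1 ≤ perm i ∧ perm i ≤ m)
    (hpermInv : ∀ i, 1 ≤ i → i ≤ m →
      1 ≤ permInv i ∧ permInv i ≤ m ∧ perm (permInv i) = i)
    (hInvPerm : ∀ i, 1 ≤ i → i ≤ m → permInv (perm i) = i)
    (X : List ℕ) (hXlen : X.length ≤ ℓ) (hXbin : ∀ a ∈ X, a < 2)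
    (b e : ℕ) (hb : b ≤ m) (he : e ≤ m) :
    { i | b < i ∧ i ≤ e ∧ X <+: W i } =
      perm '' ((fun j => cdiv j (ℓ + Nat.log 2 m + 2)) ''
        LexRange (X.reverse ++ [4] ++ sEnc (1 + Nat.log 2 m) b)
          (X.reverse ++ [4] ++ sEnc (1 + Nat.log 2 m) e)
          (PermSeqToString m perm W)) :=
  stmt14_general m ℓ W hWlen hWbin perm permInv hperm hpermInv X hXlen b e hb he
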